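/- For every μ ∈ D(B), the image B̂ = {f̂ : f ∈ B} of B under the Gelfand transform is dense in the real Hilbert space L²(Δ, μ̂; ℝ). -/

import Mathlib

open MeasureTheory Filter Topology BoundedContinuousFunction
open scoped ZeroAtInfty ENNReal

/-- The complexification of a bounded real-valued function: we regard a bounded real
function on `X` as a bounded complex function. (`X` carries the discrete topology, so
`X →ᵇ ℝ` is exactly the space of bounded real-valued functions on `X`.) -/
noncomputable def cplx {X : Type*} [TopologicalSpace X] (f : X →ᵇ ℝ) : X →ᵇ ℂ :=
  BoundedContinuousFunction.comp Complex.ofReal Complex.isometry_ofReal.lipschitz f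

/-- `A(B)`: the closure, in the supremum norm, of the complexification `B + iB` of a
set `B` of bounded real-valued functions, inside the C*-algebra of all bounded
complex-valued functions on `X`. -/
noncomputable def AofB {X : Type*} [TopologicalSpace X] (B : Set (X →ᵇ ℝ)) : Set (X →ᵇ ℂ) :=
  closure {a : X →ᵇ ℂ | ∃ f ∈ B, ∃ g ∈ B, a = cplx f + Complex.I • cplx g}


/-!
Write `f̂ := Re G(cplx f)`. Since `f̂ ∘ ι = f` on the dense set `ι X`, the map `f ↦ f̂` is
multiplicative, so `f̂ ^ 2 = (f * f)^` is `ν`-integrable and `f̂ ∈ L²(ν)`; and since `G` maps `A(B)`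
onto `C₀(Δ)`, every compactly supported continuous `g` is a uniform limit of transforms `f̂`.
Uniform approximation does not control the `L²` norm when `ν` is infinite, so instead we fix
`P ∈ B` with `P̂ ≥ 1/2` on the support of `g` and write `g = h * P̂` with `h` compactly supported:
then `‖g - (f * P)^‖₂ ≤ ‖h - f̂‖_∞ ‖P̂‖₂`. Finally, compactly supported continuous functions are
dense in `L²` of a regular measure on a locally compact Hausdorff space.
-/

section CompactlySupportedDense

variable {α E : Type*} [TopologicalSpace α] [T2Space α] [LocallyCompactSpace α]
  [MeasurableSpace α] [BorelSpace α] [NormedAddCommGroup E] [NormedSpace ℝ E]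
  {μ : Measure α} [μ.Regular] {p : ℝ≥0∞}

theorem exists_hasCompactSupport_eLpNorm_sub_indicator_le (hp : p ≠ ∞) {t : Set α}
    (ht : MeasurableSet t) (htμ : μ t < ∞) (c : E) {ε : ℝ≥0∞} (hε : ε ≠ 0) :
    ∃ g : α → E, Continuous g ∧ HasCompactSupport g ∧
      eLpNorm (g - t.indicator fun _ => c) p μ ≤ ε := by
  obtain ⟨η, hη, hηε⟩ := exists_eLpNorm_indicator_le (μ := μ) hp c hε
  have hη2 : ((η : ℝ≥0∞) / 2) ≠ 0 := by simpa using hη.ne'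
  obtain ⟨K, hKt, hK, hμK⟩ := ht.exists_isCompact_sdiff_lt htμ.ne hη2
  obtain ⟨V, hKV, hV, -, hμV⟩ :=
    hK.measurableSet.exists_isOpen_sdiff_lt (hK.measure_lt_top (μ := μ)).ne hη2
  obtain ⟨χ, hχK, hχV, hχc, hχ01⟩ :=
    exists_continuous_one_zero_of_isCompact hK hV.isClosed_compl (disjoint_compl_right_iff.2 hKV)
  refine ⟨fun x => χ x • c, by fun_prop, hχc.smul_right, ?_⟩
  have hbound : ∀ x, ‖χ x • c - t.indicator (fun _ => c) x‖ ≤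
      ‖((V ∪ t) \ K).indicator (fun _ => c) x‖ := by
    intro x
    by_cases hxK : x ∈ K
    · simp [hχK hxK, hKt hxK, hxK]
    by_cases hxVt : x ∈ V ∪ t
    · have h01 := hχ01 x
      rw [Set.indicator_of_mem (Set.mem_sdiff_of_mem hxVt hxK)]
      by_cases hxt : x ∈ t
      · rw [Set.indicator_of_mem hxt, show χ x • c - c = (χ x - 1) • c by rw [sub_smul, one_smul],
          norm_smul]
        refine mul_le_of_le_one_left (norm_nonneg c) ?_
        rw [Real.norm_eq_abs, abs_le]
        constructor <;> linarith [h01.1, h01.2]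
      · rw [Set.indicator_of_notMem hxt, sub_zero, norm_smul]
        refine mul_le_of_le_one_left (norm_nonneg c) ?_
        rw [Real.norm_eq_abs, abs_of_nonneg h01.1]
        exact h01.2
    · rw [Set.mem_union, not_or] at hxVt
      simp [hχV hxVt.1, hxVt.2]
  have hμ : μ ((V ∪ t) \ K) ≤ η :=
    calc μ ((V ∪ t) \ K) = μ (V \ K ∪ t \ K) := by rw [Set.union_sdiff_distrib]
      _ ≤ μ (V \ K) + μ (t \ K) := measure_union_le _ _
      _ ≤ η / 2 + η / 2 := add_le_add hμV.le hμK.le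
      _ = η := ENNReal.add_halves _
  exact (eLpNorm_mono hbound).trans (hηε _ hμ)

-- Unlike `MeasureTheory.MemLp.exists_hasCompactSupport_eLpNorm_sub_le`, no `NormalSpace`
-- assumption: a locally compact Hausdorff space need not be normal.
theorem MeasureTheory.MemLp.exists_hasCompactSupport_eLpNorm_sub_le_of_locallyCompact
    (hp : p ≠ ∞) {f : α → E} (hf : MemLp f p μ) {ε : ℝ≥0∞} (hε : ε ≠ 0) :
    ∃ g : α → E, Continuous g ∧ HasCompactSupport g ∧ eLpNorm (f - g) p μ ≤ ε := by
  have hadd : ∀ f g : α → E, Continuous f ∧ HasCompactSupport f →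
      Continuous g ∧ HasCompactSupport g → Continuous (f + g) ∧ HasCompactSupport (f + g) :=
    fun f g hf hg => ⟨hf.1.add hg.1, hf.2.add hg.2⟩
  have hmeas : ∀ f : α → E, Continuous f ∧ HasCompactSupport f → AEStronglyMeasurable f μ :=
    fun f hf => (hf.1.stronglyMeasurable_of_hasCompactSupport hf.2).aestronglyMeasurable
  refine (hf.induction_dense hp _ ?_ hadd hmeas hε).imp fun g hg => ⟨hg.2.1, hg.2.2, hg.1⟩
  intro c t ht htμ ε hε
  obtain ⟨g, hg, hgc, hgt⟩ := exists_hasCompactSupport_eLpNorm_sub_indicator_le hp ht htμ c hε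
  exact ⟨g, hgt, hg, hgc⟩

theorem MeasureTheory.Lp.dense_of_forall_hasCompactSupport [Fact (1 ≤ p)] (hp : p ≠ ∞)
    {S : Set (Lp E p μ)}
    (hS : ∀ g : α → E, Continuous g → HasCompactSupport g → ∀ ε : ℝ≥0∞, ε ≠ 0 →
      ∃ s ∈ S, eLpNorm (g - ⇑s) p μ ≤ ε) :
    Dense S := by
  refine Metric.dense_iff.2 fun f r hr => ?_
  have hr3 : ENNReal.ofReal (r / 3) ≠ 0 := by simp [hr]
  obtain ⟨g, hg, hgc, hfg⟩ :=
    (Lp.memLp f).exists_hasCompactSupport_eLpNorm_sub_le_of_locallyCompact hp hr3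
  obtain ⟨s, hs, hgs⟩ := hS g hg hgc _ hr3
  refine ⟨s, ?_, hs⟩
  have hg_meas : AEStronglyMeasurable g μ :=
    (hg.stronglyMeasurable_of_hasCompactSupport hgc).aestronglyMeasurable
  have hfs : eLpNorm (⇑f - ⇑s) p μ ≤ ENNReal.ofReal (r / 3 + r / 3) :=
    calc eLpNorm (⇑f - ⇑s) p μ = eLpNorm ((⇑f - g) + (g - ⇑s)) p μ := by rw [sub_add_sub_cancel]
      _ ≤ eLpNorm (⇑f - g) p μ + eLpNorm (g - ⇑s) p μ :=
        eLpNorm_add_le ((Lp.aestronglyMeasurable f).sub hg_meas)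
          (hg_meas.sub (Lp.aestronglyMeasurable s)) Fact.out
      _ ≤ ENNReal.ofReal (r / 3) + ENNReal.ofReal (r / 3) := add_le_add hfg hgs
      _ = ENNReal.ofReal (r / 3 + r / 3) :=
        (ENNReal.ofReal_add (by positivity) (by positivity)).symm
  rw [Metric.mem_ball, dist_comm, Lp.dist_def]
  calc (eLpNorm (⇑f - ⇑s) p μ).toReal ≤ r / 3 + r / 3 :=
        ENNReal.toReal_le_of_le_ofReal (by positivity) hfs
    _ < r := by linarith

end CompactlySupportedDense

section Gelfand

variable {X Δ : Type*} [TopologicalSpace X] [TopologicalSpace Δ] {B : Set (X →ᵇ ℝ)} {ι : X → Δ}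
  {G : (X →ᵇ ℂ) → C₀(Δ, ℂ)}

@[simp]
theorem cplx_apply (f : X →ᵇ ℝ) (x : X) : cplx f x = f x := rfl

theorem cplx_mem_AofB (hB0 : 0 ∈ B) {f : X →ᵇ ℝ} (hf : f ∈ B) : cplx f ∈ AofB B :=
  subset_closure ⟨f, hf, 0, hB0, by ext x; simp⟩

variable (G) in
-- The paper's `f̂` for `f ∈ B`; taking the real part makes it real-valued without using that `G`
-- preserves the involution.
noncomputable def gelfandRe (f : X →ᵇ ℝ) (φ : Δ) : ℝ := (G (cplx f) φ).re

theorem continuous_gelfandRe (f : X →ᵇ ℝ) : Continuous (gelfandRe G f) :=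
  Complex.continuous_re.comp (map_continuous _)

theorem gelfandRe_apply_of_mem (hB0 : 0 ∈ B) (hGeval : ∀ a ∈ AofB B, ∀ x, G a (ι x) = a x)
    {f : X →ᵇ ℝ} (hf : f ∈ B) (x : X) : gelfandRe G f (ι x) = f x := by
  simp [gelfandRe, hGeval _ (cplx_mem_AofB hB0 hf)]

theorem gelfandRe_mul (hι : DenseRange ι) (hB0 : 0 ∈ B)
    (hGeval : ∀ a ∈ AofB B, ∀ x, G a (ι x) = a x) (hBmul : ∀ f ∈ B, ∀ g ∈ B, f * g ∈ B)
    {f g : X →ᵇ ℝ} (hf : f ∈ B) (hg : g ∈ B) :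
    gelfandRe G (f * g) = gelfandRe G f * gelfandRe G g := by
  refine hι.equalizer (continuous_gelfandRe _)
    ((continuous_gelfandRe f).mul (continuous_gelfandRe g)) (funext fun x => ?_)
  simp [gelfandRe_apply_of_mem hB0 hGeval, hf, hg, hBmul f hf g hg]

theorem memLp_two_gelfandRe [MeasurableSpace Δ] [OpensMeasurableSpace Δ] {ν : Measure Δ}
    (hι : DenseRange ι) (hB0 : 0 ∈ B) (hGeval : ∀ a ∈ AofB B, ∀ x, G a (ι x) = a x)
    (hBmul : ∀ f ∈ B, ∀ g ∈ B, f * g ∈ B) {f : X →ᵇ ℝ} (hf : f ∈ B)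
    (hff : Integrable (gelfandRe G (f * f)) ν) : MemLp (gelfandRe G f) 2 ν := by
  rw [memLp_two_iff_integrable_sq (continuous_gelfandRe f).aestronglyMeasurable]
  simpa [gelfandRe_mul hι hB0 hGeval hBmul hf hf, sq, Pi.mul_def] using hff

-- The approximant is read off from `B + iB` near a preimage of `u` under `G`; the estimate,
-- valid on the dense range of `ι`, passes to all of `Δ` by continuity.
theorem exists_gelfandRe_abs_sub_le (hι : DenseRange ι) (hB0 : 0 ∈ B)
    (hGeval : ∀ a ∈ AofB B, ∀ x, G a (ι x) = a x) (hGsurj : ∀ h : C₀(Δ, ℂ), ∃ a ∈ AofB B, G a = h)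
    {u : Δ → ℝ} (hu : Continuous u) (huc : HasCompactSupport u) {δ : ℝ} (hδ : 0 < δ) :
    ∃ f ∈ B, ∀ φ, |gelfandRe G f φ - u φ| ≤ δ := by
  let U : C₀(Δ, ℂ) :=
    ⟨⟨fun φ => (u φ : ℂ), by fun_prop⟩, (huc.comp_left Complex.ofReal_zero).is_zero_at_infty⟩
  obtain ⟨a, ha, hGa⟩ := hGsurj U
  obtain ⟨b, ⟨f, hf, f', hf', rfl⟩, hab⟩ := Metric.mem_closure_iff.1 ha δ hδ
  refine ⟨f, hf, fun φ => hι.induction_on φ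
    (isClosed_le ((continuous_gelfandRe f).sub hu).abs continuous_const) fun x => ?_⟩
  have hux : u (ι x) = (a x).re := by
    rw [← hGeval a ha x, hGa]
    rfl
  calc |gelfandRe G f (ι x) - u (ι x)| = |(a x - (cplx f + Complex.I • cplx f') x).re| := by
        rw [gelfandRe_apply_of_mem hB0 hGeval hf, hux, abs_sub_comm]
        simp
    _ ≤ ‖a x - (cplx f + Complex.I • cplx f') x‖ := Complex.abs_re_le_norm _
    _ = dist (a x) ((cplx f + Complex.I • cplx f') x) := (dist_eq_norm _ _).symm
    _ ≤ dist a (cplx f + Complex.I • cplx f') := dist_coe_le_dist x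
    _ ≤ δ := hab.le

theorem exists_gelfandRe_eLpNorm_sub_le [LocallyCompactSpace Δ] [T2Space Δ] [MeasurableSpace Δ]
    {ν : Measure Δ} {p : ℝ≥0∞} (hι : DenseRange ι) (hB0 : 0 ∈ B)
    (hBmul : ∀ f ∈ B, ∀ g ∈ B, f * g ∈ B) (hGeval : ∀ a ∈ AofB B, ∀ x, G a (ι x) = a x)
    (hGsurj : ∀ h : C₀(Δ, ℂ), ∃ a ∈ AofB B, G a = h) (hmem : ∀ f ∈ B, MemLp (gelfandRe G f) p ν)
    {g : Δ → ℝ} (hg : Continuous g) (hgc : HasCompactSupport g) {ε : ℝ≥0∞} (hε : ε ≠ 0) :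
    ∃ q ∈ B, eLpNorm (g - gelfandRe G q) p ν ≤ ε := by
  obtain ⟨χ, hχ, -, hχc, -⟩ :=
    exists_continuous_one_zero_of_isCompact hgc.isCompact isClosed_empty (Set.disjoint_empty _)
  obtain ⟨P, hP, hPχ⟩ := exists_gelfandRe_abs_sub_le hι hB0 hGeval hGsurj χ.continuous hχc
    one_half_pos
  set w := gelfandRe G P
  have hw : ∀ φ ∈ tsupport g, 1 / 2 ≤ w φ := fun φ hφ => by
    have := abs_le.1 (hPχ φ)
    rw [hχ hφ, Pi.one_apply] at this
    linarith [this.1]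
  have hpos : ∀ φ, 0 < max (w φ) (1 / 2) := fun φ => lt_max_of_lt_right one_half_pos
  set h := g * fun φ => (max (w φ) (1 / 2))⁻¹
  have hgh : g = h * w := funext fun φ => by
    by_cases hφ : φ ∈ tsupport g
    · show g φ = g φ * (max (w φ) (1 / 2))⁻¹ * w φ
      rw [max_eq_left (hw φ hφ), mul_assoc,
        inv_mul_cancel₀ (one_half_pos.trans_le (hw φ hφ)).ne', mul_one]
    · simp [h, image_eq_zero_of_notMem_tsupport hφ]
  obtain ⟨δ, hδ, hδε⟩ := ENNReal.exists_nnreal_pos_mul_lt (hmem P hP).eLpNorm_ne_top hε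
  obtain ⟨f, hf, hfh⟩ := exists_gelfandRe_abs_sub_le hι hB0 hGeval hGsurj
    (hg.mul (((continuous_gelfandRe P).max continuous_const).inv₀ fun φ => (hpos φ).ne'))
    hgc.mul_right hδ
  refine ⟨f * P, hBmul f hf P hP, ?_⟩
  rw [gelfandRe_mul hι hB0 hGeval hBmul hf hP, hgh, ← sub_mul]
  calc eLpNorm ((h - gelfandRe G f) * w) p ν ≤ ENNReal.ofReal δ * eLpNorm w p ν :=
        eLpNorm_le_mul_eLpNorm_of_ae_le_mul (ae_of_all _ fun φ => by
          rw [Pi.mul_apply, norm_mul, Real.norm_eq_abs, Pi.sub_apply, abs_sub_comm]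
          exact mul_le_mul_of_nonneg_right (hfh φ) (norm_nonneg _)) p
    _ ≤ ε := by simpa using hδε.le

end Gelfand

theorem gelfand_image_dense_in_L2_general {X : Type*} [Nonempty X] [TopologicalSpace X]
    (B : Set (X →ᵇ ℝ))
    (hBsmul : ∀ (c : ℝ), ∀ f ∈ B, c • f ∈ B)
    (hBmul : ∀ f ∈ B, ∀ g ∈ B, f * g ∈ B)
    (hBnv : ∀ x : X, ∃ f ∈ B, f x ≠ 0)
    {Δ : Type*} [TopologicalSpace Δ] [LocallyCompactSpace Δ] [T2Space Δ]
    [MeasurableSpace Δ] [BorelSpace Δ]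
    (ι : X → Δ) (hι : DenseRange ι)
    (G : (X →ᵇ ℂ) → C₀(Δ, ℂ))
    (hGeval : ∀ a ∈ AofB B, ∀ x : X, G a (ι x) = a x)
    (hGsurj : ∀ h : C₀(Δ, ℂ), ∃ a ∈ AofB B, G a = h)
    {mX : MeasurableSpace X}
    (μ : Measure X)
    (ν : Measure Δ) (hνreg : ν.Regular)
    (hν : ∀ f ∈ B, Integrable (fun φ => ((G (cplx f)) φ).re) ν ∧
      ∫ x, f x ∂μ = ∫ φ, ((G (cplx f)) φ).re ∂ν)
:
    Dense {h : Lp ℝ 2 ν | ∃ f ∈ B, (⇑h : Δ → ℝ) =ᵐ[ν] fun φ => ((G (cplx f)) φ).re} := by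
  obtain ⟨f₀, hf₀, -⟩ := hBnv (Classical.arbitrary X)
  have hB0 : (0 : X →ᵇ ℝ) ∈ B := by simpa using hBsmul 0 f₀ hf₀
  have hmem : ∀ f ∈ B, MemLp (gelfandRe G f) 2 ν := fun f hf =>
    memLp_two_gelfandRe hι hB0 hGeval hBmul hf (hν (f * f) (hBmul f hf f hf)).1
  refine Lp.dense_of_forall_hasCompactSupport (by norm_num) fun g hg hgc ε hε => ?_
  obtain ⟨q, hq, hgq⟩ := exists_gelfandRe_eLpNorm_sub_le hι hB0 hBmul hGeval hGsurj hmem hg hgc hε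
  have hq_ae := (hmem q hq).coeFn_toLp
  exact ⟨(hmem q hq).toLp _, ⟨q, hq, hq_ae⟩,
    (eLpNorm_congr_ae (EventuallyEq.rfl.sub hq_ae)).trans_le hgq⟩

/-- For every `μ ∈ D(B)` with transferred Radon measure `ν = μ̂`, the
image `B̂` of `B` under the Gelfand transform is dense in the real Hilbert space
`L²(Δ, μ̂; ℝ)`. -/
theorem gelfand_image_dense_in_L2 {X : Type*} [Nonempty X] [TopologicalSpace X] [DiscreteTopology X]
    (B : Set (X →ᵇ ℝ))
    (hBadd : ∀ f ∈ B, ∀ g ∈ B, f + g ∈ B)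
    (hBsmul : ∀ (c : ℝ), ∀ f ∈ B, c • f ∈ B)
    (hBmax : ∀ f ∈ B, ∀ g ∈ B, ∃ h ∈ B, ∀ x, h x = max (f x) (g x))
    (hBmin : ∀ f ∈ B, ∀ g ∈ B, ∃ h ∈ B, ∀ x, h x = min (f x) (g x))
    (hBmul : ∀ f ∈ B, ∀ g ∈ B, f * g ∈ B)
    (hBstone : ∀ f ∈ B, ∃ h ∈ B, ∀ x, h x = min (f x) 1)
    (hBnv : ∀ x : X, ∃ f ∈ B, f x ≠ 0)
    {Δ : Type*} [TopologicalSpace Δ] [LocallyCompactSpace Δ] [T2Space Δ]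
    [MeasurableSpace Δ] [BorelSpace Δ]
    (ι : X → Δ) (hι : DenseRange ι)
    (G : (X →ᵇ ℂ) → C₀(Δ, ℂ))
    (hGeval : ∀ a ∈ AofB B, ∀ x : X, G a (ι x) = a x)
    (hGsurj : ∀ h : C₀(Δ, ℂ), ∃ a ∈ AofB B, G a = h)
    {mX : MeasurableSpace X}
    (hmX : mX = ⨆ f ∈ B, MeasurableSpace.comap (⇑f : X → ℝ) inferInstance)
    (μ : Measure X) (hμ : ∀ f ∈ B, Integrable (⇑f) μ)
    (ν : Measure Δ) (hνreg : ν.Regular)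
    (hν : ∀ f ∈ B, Integrable (fun φ => ((G (cplx f)) φ).re) ν ∧
      ∫ x, f x ∂μ = ∫ φ, ((G (cplx f)) φ).re ∂ν)
:
    Dense {h : Lp ℝ 2 ν | ∃ f ∈ B, (⇑h : Δ → ℝ) =ᵐ[ν] fun φ => ((G (cplx f)) φ).re} :=
  gelfand_image_dense_in_L2_general B hBsmul hBmul hBnv ι hι G hGeval hGsurj (mX := mX) μ ν hνreg hν
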